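/- Let n ≥ 7 be a natural number, let n_co be a natural number with 1 ≤ n_co and 2·n_co ≤ n, set n_p = n − n_co, and let λ be a real number with 0 < λ < 1/(n−1). Assume 1 − λ·Z − λ²·Y > 0 and 1 − λ·(n_co − 1) − λ²·n_p·n_co > 0. Then the incomplete-information core action strictly exceeds the complete-information core action: (1 + λ·X)/(1 − λ·Z − λ²·Y) > (1 + λ·n_p)/(1 − λ·(n_co − 1) − λ²·n_p·n_co). -/

import Mathlib

/-!
Write `m = 2^(n-3)`, `p = n_p` and `c = n_co = n - p`. The binomial sums give `Δ = 4m - (n-1)`,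
`X = (n-1)(2m-1)/Δ`, `Y = (n-1)(nm-(n-1))/Δ` and `X + Z = n - 1`. Cross-multiplied, the
difference of the two actions then has no terms of order `λ⁰` and `λ¹`: it equals `λ²(C₂ + λC₃)`
with `C₂ = Y + p(p-1) - (n-1)X` and `C₃ = p(Y - cX)`. Since `2p ≥ n` gives `4p(p-1) ≥ n(n-2)`,
`ΔC₂` and `Δ((n-1)C₂ + C₃)` are bounded below by positive multiples of `4m - n(n-1)` and
`4m - n²`, and `n² ≤ 2^(n-1)` for `n ≥ 7`. Finally `λ(n-1) < 1` and
`C₂ + λC₃ = C₂(1 - λ(n-1)) + λ((n-1)C₂ + C₃)`.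
-/

open Finset

lemma sum_Icc_eq_sum_range {M : Type*} [AddCommMonoid M] (f : ℕ → M) (a b : ℕ) :
    ∑ k ∈ Icc a b, f k = ∑ j ∈ range (b + 1 - a), f (a + j) := by
  rw [← Ico_add_one_right_eq_Icc, sum_Ico_eq_sum_range]

section BinomialSums

variable {R : Type*} [CommRing R]

lemma cast_sum_range_choose (N : ℕ) : ∑ j ∈ range (N + 1), (N.choose j : R) = 2 ^ N := by
  exact_mod_cast congrArg (Nat.cast (R := R)) (Nat.sum_range_choose N)

lemma sum_Icc_choose_sub {a b : ℕ} (hab : a ≤ b) :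
    ∑ k ∈ Icc a b, ((b - a).choose (k - a) : R) = 2 ^ (b - a) := by
  rw [sum_Icc_eq_sum_range, show b + 1 - a = b - a + 1 by omega]
  simp only [Nat.add_sub_cancel_left]
  exact cast_sum_range_choose (b - a)

lemma sum_Icc_one_choose_pred (N : ℕ) :
    ∑ k ∈ Icc 1 N, (N.choose (k - 1) : R) = 2 ^ N - 1 := by
  rw [← cast_sum_range_choose, sum_range_succ, sum_Icc_eq_sum_range, Nat.add_sub_cancel]
  simp

lemma sum_Icc_one_mul_choose_pred (N : ℕ) :
    ∑ k ∈ Icc 1 N, (k : R) * N.choose (k - 1) = N * 2 ^ (N - 1) + 2 ^ N - (N + 1) := by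
  have hmul : ∑ j ∈ range (N + 1), (j : R) * N.choose j = N * 2 ^ (N - 1) := by
    exact_mod_cast congrArg (Nat.cast (R := R)) (Nat.sum_range_mul_choose N)
  rw [← hmul, ← cast_sum_range_choose, ← sum_add_distrib, sum_range_succ, sum_Icc_eq_sum_range,
    Nat.add_sub_cancel]
  simp [add_mul, add_comm]

end BinomialSums

lemma sq_le_two_pow_pred {n : ℕ} (hn : 7 ≤ n) : n ^ 2 ≤ 2 ^ (n - 1) := by
  induction n, hn using Nat.le_induction with
  | base => norm_num
  | succ k hk ih =>
    have hpow : 2 ^ k = 2 * 2 ^ (k - 1) := by rw [← pow_succ', Nat.sub_add_cancel (by omega)]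
    rw [Nat.add_sub_cancel, hpow]
    nlinarith

section CoreAction

variable {n m p c lam X Y Z : ℝ}

lemma mul_sub_two_le_four_mul_mul_sub_one (hn : 1 ≤ n) (hp : n ≤ 2 * p) :
    n * (n - 2) ≤ 4 * (p * (p - 1)) := by
  nlinarith

lemma coreGap_quadCoeff_pos (hn : 2 < n) (hm : n ^ 2 ≤ 4 * m) (hp : n ≤ 2 * p)
    (hX : X * (4 * m - (n - 1)) = (n - 1) * (2 * m - 1))
    (hY : Y * (4 * m - (n - 1)) = (n - 1) * (n * m - (n - 1))) :
    0 < Y + p * (p - 1) - X * (n - 1) := by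
  have hD : 0 < 4 * m - (n - 1) := by nlinarith
  have hpp := mul_sub_two_le_four_mul_mul_sub_one (by linarith) hp
  have hcleared : (Y + p * (p - 1) - X * (n - 1)) * (4 * m - (n - 1))
      = p * (p - 1) * (4 * m - (n - 1)) - (n - 1) * (n - 2) * m := by
    linear_combination hY - (n - 1) * hX
  refine (mul_pos_iff_of_pos_right hD).mp ?_
  rw [hcleared]
  nlinarith [mul_le_mul_of_nonneg_right hpp hD.le]

lemma coreGap_combinedCoeff_nonneg (hn : 2 < n) (hm : n ^ 2 ≤ 4 * m) (hp : n ≤ 2 * p)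
    (hc : p + c = n)
    (hX : X * (4 * m - (n - 1)) = (n - 1) * (2 * m - 1))
    (hY : Y * (4 * m - (n - 1)) = (n - 1) * (n * m - (n - 1))) :
    0 ≤ (n - 1) * (Y + p * (p - 1) - X * (n - 1)) + p * (Y - X * c) := by
  have hD : 0 < 4 * m - (n - 1) := by nlinarith
  have hpp := mul_sub_two_le_four_mul_mul_sub_one (by linarith) hp
  have hcleared :
      ((n - 1) * (Y + p * (p - 1) - X * (n - 1)) + p * (Y - X * c)) * (4 * m - (n - 1))
        = (n - 1) * (p * (p - 1) * (4 * m - n) - (n - 1) * (n - 2) * m + p * m * (2 * p - n)) := by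
    obtain rfl : c = n - p := by linarith
    linear_combination (n - 1 + p) * hY - ((n - 1) ^ 2 + p * (n - p)) * hX
  refine nonneg_of_mul_nonneg_left ?_ hD
  rw [hcleared]
  have hm0 : 0 ≤ m := by nlinarith
  have hp0 : 0 ≤ p := by linarith
  have h4 : 0 ≤ 4 * m - n := by nlinarith
  refine mul_nonneg (by linarith) ?_
  nlinarith [mul_le_mul_of_nonneg_right hpp h4, mul_nonneg (mul_nonneg hp0 hm0) (sub_nonneg.2 hp),
    mul_nonneg (sub_nonneg.2 hn.le) (sub_nonneg.2 hm)]

lemma coreAction_cross_sub_eq (hXZ : X + Z = n - 1) (hc : p + c = n) :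
    (1 + lam * X) * (1 - lam * (c - 1) - lam ^ 2 * p * c)
        - (1 + lam * p) * (1 - lam * Z - lam ^ 2 * Y)
      = lam ^ 2 * ((Y + p * (p - 1) - X * (n - 1)) + lam * (p * (Y - X * c))) := by
  obtain rfl : Z = n - 1 - X := by linarith
  obtain rfl : c = n - p := by linarith
  ring

theorem completeCoreAction_lt_coreAction (hn : 2 < n) (hm : n ^ 2 ≤ 4 * m) (hp : n ≤ 2 * p)
    (hc : p + c = n) (hlam0 : 0 < lam) (hlam1 : lam * (n - 1) < 1)
    (hX : X = (n - 1) * (2 * m - 1) / (4 * m - (n - 1)))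
    (hY : Y = (n - 1) * (n * m - (n - 1)) / (4 * m - (n - 1)))
    (hZ : Z = (n - 1) * (2 * m - (n - 2)) / (4 * m - (n - 1)))
    (hden1 : 0 < 1 - lam * Z - lam ^ 2 * Y) (hden2 : 0 < 1 - lam * (c - 1) - lam ^ 2 * p * c) :
    (1 + lam * p) / (1 - lam * (c - 1) - lam ^ 2 * p * c)
      < (1 + lam * X) / (1 - lam * Z - lam ^ 2 * Y) := by
  have hD : 4 * m - (n - 1) ≠ 0 := by nlinarith
  have hX' := (eq_div_iff hD).mp hX
  have hY' := (eq_div_iff hD).mp hY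
  have hXZ : X + Z = n - 1 := by
    rw [hX, hZ, ← add_div, div_eq_iff hD]
    ring
  have hC₂ := coreGap_quadCoeff_pos hn hm hp hX' hY'
  have hC₃ := coreGap_combinedCoeff_nonneg hn hm hp hc hX' hY'
  rw [div_lt_div_iff₀ hden2 hden1, ← sub_pos, coreAction_cross_sub_eq hXZ hc]
  have hsplit : (Y + p * (p - 1) - X * (n - 1)) + lam * (p * (Y - X * c))
      = (Y + p * (p - 1) - X * (n - 1)) * (1 - lam * (n - 1))
        + lam * ((n - 1) * (Y + p * (p - 1) - X * (n - 1)) + p * (Y - X * c)) := by ring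
  rw [hsplit]
  exact mul_pos (pow_pos hlam0 2)
    (add_pos_of_pos_of_nonneg (mul_pos hC₂ (sub_pos.2 hlam1)) (mul_nonneg hlam0.le hC₃))

end CoreAction

theorem stmt_10_general (n n_co : ℕ) (hn : 7 ≤ n) (hc2 : 2 * n_co ≤ n)
    (n_p : ℕ) (hnp : n_p = n - n_co)
    (lam : ℝ) (hlam0 : 0 < lam) (hlam1 : lam < 1 / ((n : ℝ) - 1))
    (Δ X Y Z : ℝ)
    (hΔ : Δ = 2 ^ (n - 1) - ((n : ℝ) - 1))
    (hX : X = ((n : ℝ) - 1) * (∑ k ∈ Finset.Icc 1 (n - 2), ((n - 2).choose (k - 1) : ℝ)) / Δ)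
    (hY : Y = ((n : ℝ) - 1) * (∑ k ∈ Finset.Icc 1 (n - 2), (k : ℝ) * ((n - 2).choose (k - 1) : ℝ)) / Δ)
    (hZ : Z = ((n : ℝ) - 1) *
      ((∑ k ∈ Finset.Icc 2 n, ((n - 2).choose (k - 2) : ℝ)) - ((n - 2).choose (n - 3) : ℝ)) / Δ)
    (hden1 : 0 < 1 - lam * Z - lam ^ 2 * Y)
    (hden2 : 0 < 1 - lam * ((n_co : ℝ) - 1) - lam ^ 2 * (n_p : ℝ) * (n_co : ℝ)) :
    (1 + lam * X) / (1 - lam * Z - lam ^ 2 * Y) >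
      (1 + lam * (n_p : ℝ)) / (1 - lam * ((n_co : ℝ) - 1) - lam ^ 2 * (n_p : ℝ) * (n_co : ℝ)) := by
  have hn7 : (7 : ℝ) ≤ n := by exact_mod_cast hn
  set m : ℝ := 2 ^ (n - 3)
  have hpow1 : (2 : ℝ) ^ (n - 1) = 4 * m := by
    rw [show n - 1 = n - 3 + 2 by omega, pow_add]; ring
  have hpow2 : (2 : ℝ) ^ (n - 2) = 2 * m := by
    rw [show n - 2 = n - 3 + 1 by omega, pow_succ]; ring
  have hcast : ((n - 2 : ℕ) : ℝ) = n - 2 := by push_cast [show 2 ≤ n by omega]; ring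
  have hchoose : ((n - 2).choose (n - 3) : ℝ) = n - 2 := by
    rw [show n - 2 = n - 3 + 1 by omega, Nat.choose_succ_self_right]
    push_cast [show 3 ≤ n by omega]
    ring
  have hΔ' : Δ = 4 * m - (n - 1) := by rw [hΔ, hpow1]
  refine completeCoreAction_lt_coreAction (m := m) (by linarith) ?_ ?_ ?_ hlam0
    ((lt_div_iff₀ (by linarith)).mp hlam1) ?_ ?_ ?_ hden1 hden2
  · rw [← hpow1]; exact_mod_cast sq_le_two_pow_pred hn
  · exact_mod_cast (show n ≤ 2 * n_p by omega)
  · exact_mod_cast (show n_p + n_co = n by omega)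
  · rw [hX, hΔ', sum_Icc_one_choose_pred, hpow2]
  · rw [hY, hΔ', sum_Icc_one_mul_choose_pred, hcast, show n - 2 - 1 = n - 3 by omega, hpow2]
    ring
  · rw [hZ, hΔ', sum_Icc_choose_sub (by omega), hpow2, hchoose]

/-- Lemma 1: For `n ≥ 7`, `1 ≤ n_co` with `2 n_co ≤ n`, `n_p = n - n_co`
and `0 < λ < 1/(n-1)`, with both denominators positive, the incomplete-information
core action strictly exceeds the complete-information core action:
`(1 + λX)/(1 - λZ - λ²Y) > (1 + λ n_p)/(1 - λ(n_co - 1) - λ² n_p n_co)`. -/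
theorem stmt_10 (n n_co : ℕ) (hn : 7 ≤ n) (hc1 : 1 ≤ n_co) (hc2 : 2 * n_co ≤ n)
    (n_p : ℕ) (hnp : n_p = n - n_co)
    (lam : ℝ) (hlam0 : 0 < lam) (hlam1 : lam < 1 / ((n : ℝ) - 1))
    (Δ X Y Z : ℝ)
    (hΔ : Δ = 2 ^ (n - 1) - ((n : ℝ) - 1))
    (hX : X = ((n : ℝ) - 1) * (∑ k ∈ Finset.Icc 1 (n - 2), ((n - 2).choose (k - 1) : ℝ)) / Δ)
    (hY : Y = ((n : ℝ) - 1) * (∑ k ∈ Finset.Icc 1 (n - 2), (k : ℝ) * ((n - 2).choose (k - 1) : ℝ)) / Δ)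
    (hZ : Z = ((n : ℝ) - 1) *
      ((∑ k ∈ Finset.Icc 2 n, ((n - 2).choose (k - 2) : ℝ)) - ((n - 2).choose (n - 3) : ℝ)) / Δ)
    (hden1 : 0 < 1 - lam * Z - lam ^ 2 * Y)
    (hden2 : 0 < 1 - lam * ((n_co : ℝ) - 1) - lam ^ 2 * (n_p : ℝ) * (n_co : ℝ)) :
    (1 + lam * X) / (1 - lam * Z - lam ^ 2 * Y) >
      (1 + lam * (n_p : ℝ)) / (1 - lam * ((n_co : ℝ) - 1) - lam ^ 2 * (n_p : ℝ) * (n_co : ℝ)) :=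
  stmt_10_general n n_co hn hc2 n_p hnp lam hlam0 hlam1 Δ X Y Z hΔ hX hY hZ hden1 hden2
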